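/- (Levi's theorem / Lebesgue monotone convergence theorem for abstract σ-algebras.) Let Σ be an abstract σ-algebra with measure μ, and let f and fₙ (n ∈ ℕ) be nonnegative measurable functions on Σ such that fₙ ≤ fₙ₊₁ ≤ f for all n and, for every t ∈ ℝ≥0∞, f (Set.Iic t) is a greatest lower bound of {fₙ (Set.Iic t) | n ∈ ℕ} (i.e. fₙ ↗ f). Then ⨆ n, ∫ fₙ dμ = ∫ f dμ; equivalently limₙ ∫ fₙ dμ = ∫ f dμ in ℝ≥0∞. -/

import Mathlib

open scoped ENNReal

/-- A nonnegative measurable function on an abstract σ-algebra `A`: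
a morphism of abstract σ-algebras from the Borel σ-algebra of `[0,∞]` to `A`,
encoded as a map on sets constrained on Borel sets. -/
structure NNMeasFun (A : Type*) [BooleanAlgebra A] where
  toFun : Set ℝ≥0∞ → A
  map_empty : toFun ∅ = ⊥
  map_univ : toFun Set.univ = ⊤
  map_compl : ∀ s : Set ℝ≥0∞, MeasurableSet s → toFun sᶜ = (toFun s)ᶜ
  map_inter : ∀ s t : Set ℝ≥0∞, MeasurableSet s → MeasurableSet t →
    toFun (s ∩ t) = toFun s ⊓ toFun t
  map_iUnion : ∀ s : ℕ → Set ℝ≥0∞, (∀ n, MeasurableSet (s n)) →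
    IsLUB (Set.range fun n => toFun (s n)) (toFun (⋃ n, s n))

/-- Simple data on `A`: a pairwise disjoint finite family with supremum `⊤`,
together with values in `[0,∞]`. -/
structure SimpleData (A : Type*) [BooleanAlgebra A] where
  m : ℕ
  a : Fin m → A
  x : Fin m → ℝ≥0∞
  disjoint : ∀ i j, i ≠ j → a i ⊓ a j = ⊥
  sup_eq_top : Finset.univ.sup a = ⊤

open scoped Classical in
/-- The simple nonnegative measurable function induced by simple data. -/
noncomputable def SimpleData.toFun {A : Type*} [BooleanAlgebra A] (d : SimpleData A)
    (b : Set ℝ≥0∞) : A :=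
  (Finset.univ.filter fun i => d.x i ∈ b).sup d.a

/-- The point-free integral of `f` with respect to `μ`: the supremum of the
integrals of simple functions lying below `f`. -/
noncomputable def pfIntegral {A : Type*} [BooleanAlgebra A] (μ : A → ℝ≥0∞)
    (f : Set ℝ≥0∞ → A) : ℝ≥0∞ :=
  ⨆ (d : SimpleData A) (_ : ∀ t : ℝ≥0∞, f (Set.Iic t) ≤ d.toFun (Set.Iic t)),
    ∑ i, μ (d.a i) * d.x i

/-!
Monotonicity of the integral gives `∫ gₙ ≤ ∫ f`. Conversely, let `(aᵢ, xᵢ)` be simple data below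
`f` and take levels `yᵢ < xᵢ` (or `yᵢ = 0`). Since `gₙ (Iic yᵢ)` decreases to `f (Iic yᵢ)`, which
is disjoint from `aᵢ`, the pieces `aᵢ ⊓ (gₙ (Iic yᵢ))ᶜ` increase to `aᵢ`; with the value `yᵢ` on
them and `0` elsewhere they form simple data below `gₙ`. Continuity of `μ` from below then gives
`∑ μ aᵢ * yᵢ ≤ ⨆ ∫ gₙ`, and letting `yᵢ ↑ xᵢ` gives `∑ μ aᵢ * xᵢ ≤ ⨆ ∫ gₙ`.
-/

theorem IsLUB.inf_range_left {α ι : Type*} [GeneralizedHeytingAlgebra α] {s : ι → α} {b : α}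
    (h : IsLUB (Set.range s) b) (a : α) : IsLUB (Set.range fun i => a ⊓ s i) (a ⊓ b) := by
  refine ⟨?_, fun u hu => ?_⟩
  · rintro _ ⟨i, rfl⟩
    exact inf_le_inf_left a (h.1 ⟨i, rfl⟩)
  · refine le_himp_iff'.mp (h.2 ?_)
    rintro _ ⟨i, rfl⟩
    exact le_himp_iff'.mpr (hu ⟨i, rfl⟩)

theorem IsGLB.isLUB_range_compl {α ι : Type*} [BooleanAlgebra α] {s : ι → α} {b : α}
    (h : IsGLB (Set.range s) b) : IsLUB (Set.range fun i => (s i)ᶜ) bᶜ := by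
  refine ⟨?_, fun u hu => ?_⟩
  · rintro _ ⟨i, rfl⟩
    exact compl_le_compl (h.1 ⟨i, rfl⟩)
  · refine compl_le_iff_compl_le.mpr (h.2 ?_)
    rintro _ ⟨i, rfl⟩
    exact compl_le_iff_compl_le.mp (hu ⟨i, rfl⟩)

theorem ENNReal.exists_monotone_approx_from_below (x : ℝ≥0∞) :
    ∃ u : ℕ → ℝ≥0∞, Monotone u ∧ (∀ k, u k < x ∨ u k = 0) ∧ ⨆ k, u k = x := by
  rcases eq_zero_or_pos x with rfl | hx
  · exact ⟨0, monotone_const, fun _ => Or.inr rfl, iSup_const⟩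
  · obtain ⟨u, hu_mono, hu_mem, hu_lim⟩ := exists_seq_strictMono_tendsto' hx
    exact ⟨u, hu_mono.monotone, fun k => Or.inl (hu_mem k).2,
      iSup_eq_of_tendsto hu_mono.monotone hu_lim⟩

def IsSigmaAdditive {A : Type*} [BooleanAlgebra A] (μ : A → ℝ≥0∞) : Prop :=
  ∀ a : ℕ → A, (∀ i j, i ≠ j → a i ⊓ a j = ⊥) →
    ∀ s, IsLUB (Set.range a) s → μ s = ∑' n, μ (a n)

namespace IsSigmaAdditive

variable {A : Type*} [BooleanAlgebra A] {μ : A → ℝ≥0∞}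

theorem map_sup_of_disjoint (h0 : μ ⊥ = 0) (hμ : IsSigmaAdditive μ) {a b : A}
    (hab : Disjoint a b) : μ (a ⊔ b) = μ a + μ b := by
  set c : ℕ → A := fun n => if n = 0 then a else if n = 1 then b else ⊥
  have hc : ∀ i j, i ≠ j → c i ⊓ c j = ⊥ := by
    intro i j hij
    simp only [c]
    split_ifs <;> simp_all [hab.eq_bot, hab.symm.eq_bot]
  have hlub : IsLUB (Set.range c) (a ⊔ b) := by
    refine ⟨?_, fun u hu => sup_le (hu ⟨0, rfl⟩) (hu ⟨1, rfl⟩)⟩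
    rintro _ ⟨n, rfl⟩
    simp only [c]
    split_ifs
    exacts [le_sup_left, le_sup_right, bot_le]
  rw [hμ c hc _ hlub, tsum_eq_sum (s := Finset.range 2) fun n hn => ?_]
  · simp [Finset.sum_range_succ, c]
  · simp only [Finset.mem_range, not_lt] at hn
    simp [c, show n ≠ 0 by omega, show n ≠ 1 by omega, h0]

theorem mono (h0 : μ ⊥ = 0) (hμ : IsSigmaAdditive μ) : Monotone μ := fun a b hab => by
  rw [← sup_sdiff_cancel_right hab, map_sup_of_disjoint h0 hμ disjoint_sdiff_self_right]
  exact le_self_add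

theorem iSup_eq_of_monotone (h0 : μ ⊥ = 0) (hμ : IsSigmaAdditive μ) {u : ℕ → A}
    (hu : Monotone u) {b : A} (hb : IsLUB (Set.range u) b) : ⨆ n, μ (u n) = μ b := by
  have hsum : ∀ n, μ (u n) = ∑ k ∈ Finset.range (n + 1), μ (disjointed u k) := by
    intro n
    induction n with
    | zero => simp
    | succ n ih =>
      have hstep : disjointed u (n + 1) = u (n + 1) \ u n := by
        simpa using hu.disjointed_succ (not_isMax n)
      rw [Finset.sum_range_succ, ← ih, hstep, ← map_sup_of_disjoint h0 hμ disjoint_sdiff_self_right,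
        sup_sdiff_cancel_right (hu n.le_succ)]
  have hlub : IsLUB (Set.range (disjointed u)) b := by
    refine ⟨?_, fun v hv => hb.2 ?_⟩
    · rintro _ ⟨n, rfl⟩
      exact (disjointed_le u n).trans (hb.1 ⟨n, rfl⟩)
    · rintro _ ⟨n, rfl⟩
      rw [← congrFun hu.partialSups_eq n, ← partialSups_disjointed]
      exact partialSups_le _ _ _ fun k _ => hv ⟨k, rfl⟩
  have hdisj : ∀ i j, i ≠ j → disjointed u i ⊓ disjointed u j = ⊥ := fun i j hij =>
    (disjoint_disjointed u hij).eq_bot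
  rw [hμ _ hdisj b hlub, ENNReal.tsum_eq_iSup_nat' (Filter.tendsto_add_atTop_nat 1)]
  simp_rw [hsum]

end IsSigmaAdditive

section SimpleFunctions

variable {A : Type*} [BooleanAlgebra A]

theorem NNMeasFun.mono (f : NNMeasFun A) {s t : Set ℝ≥0∞} (hs : MeasurableSet s)
    (ht : MeasurableSet t) (hst : s ⊆ t) : f.toFun s ≤ f.toFun t := by
  rw [← Set.inter_eq_self_of_subset_left hst, f.map_inter s t hs ht]
  exact inf_le_right

theorem SimpleData.inf_toFun_Iic_eq_bot (d : SimpleData A) {i : Fin d.m} {t : ℝ≥0∞}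
    (ht : t < d.x i) : d.a i ⊓ d.toFun (Set.Iic t) = ⊥ := by
  rw [SimpleData.toFun, Finset.sup_inf_distrib_left, Finset.sup_eq_bot_iff]
  intro j hj
  simp only [Finset.mem_filter, Set.mem_Iic] at hj
  exact d.disjoint i j fun hij => (hij ▸ hj.2).not_gt ht

theorem SimpleData.a_le_toFun (d : SimpleData A) {j : Fin d.m} {s : Set ℝ≥0∞} (hj : d.x j ∈ s) :
    d.a j ≤ d.toFun s := by
  rw [SimpleData.toFun]
  exact Finset.le_sup (by simpa using hj)

theorem Fin.sup_univ_cons {α : Type*} [SemilatticeSup α] [OrderBot α] {m : ℕ} (a : α)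
    (b : Fin m → α) : Finset.univ.sup (Fin.cons a b : Fin (m + 1) → α) = a ⊔ Finset.univ.sup b := by
  rw [Fin.univ_succ, Finset.sup_cons, Finset.sup_map]
  rfl

def SimpleData.ofDisjoint {m : ℕ} (b : Fin m → A) (hb : ∀ i j, i ≠ j → b i ⊓ b j = ⊥)
    (y : Fin m → ℝ≥0∞) : SimpleData A where
  m := m + 1
  a := Fin.cons (Finset.univ.sup b)ᶜ b
  x := Fin.cons 0 y
  disjoint := by
    have hcompl : ∀ i, (Finset.univ.sup b)ᶜ ⊓ b i = ⊥ := fun i =>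
      disjoint_iff.mp (disjoint_compl_left.mono_right (Finset.le_sup (Finset.mem_univ i)))
    intro i j hij
    cases i using Fin.cases <;> cases j using Fin.cases
    · exact absurd rfl hij
    · exact hcompl _
    · exact (inf_comm _ _).trans (hcompl _)
    · exact hb _ _ fun h => hij (congrArg _ h)
  sup_eq_top := by rw [Fin.sup_univ_cons, compl_sup_eq_top]

theorem SimpleData.sum_ofDisjoint (μ : A → ℝ≥0∞) {m : ℕ} (b : Fin m → A)
    (hb : ∀ i j, i ≠ j → b i ⊓ b j = ⊥) (y : Fin m → ℝ≥0∞) :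
    ∑ j, μ ((ofDisjoint b hb y).a j) * (ofDisjoint b hb y).x j = ∑ i, μ (b i) * y i := by
  change ∑ j : Fin (m + 1), μ ((Fin.cons (Finset.univ.sup b)ᶜ b : Fin (m + 1) → A) j) *
    (Fin.cons 0 y : Fin (m + 1) → ℝ≥0∞) j = _
  simp [Fin.sum_univ_succ]

theorem SimpleData.le_toFun_ofDisjoint {m : ℕ} (b : Fin m → A)
    (hb : ∀ i j, i ≠ j → b i ⊓ b j = ⊥) (y : Fin m → ℝ≥0∞) {c : A} {t : ℝ≥0∞}
    (hc : ∀ i, t < y i → c ⊓ b i = ⊥) : c ≤ (ofDisjoint b hb y).toFun (Set.Iic t) := by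
  rw [← inf_top_eq c, ← (ofDisjoint b hb y).sup_eq_top, Finset.sup_inf_distrib_left]
  refine Finset.sup_le fun j _ => ?_
  cases j using Fin.cases with
  | zero => exact inf_le_right.trans (a_le_toFun _ (Set.mem_Iic.mpr zero_le))
  | succ i =>
    by_cases hi : y i ≤ t
    · exact inf_le_right.trans (a_le_toFun _ hi)
    · exact (hc i (not_le.mp hi)).le.trans bot_le

end SimpleFunctions

section Integral

variable {A : Type*} [BooleanAlgebra A] {μ : A → ℝ≥0∞}

theorem pfIntegral_anti {F G : Set ℝ≥0∞ → A}
    (hFG : ∀ t, F (Set.Iic t) ≤ G (Set.Iic t)) : pfIntegral μ G ≤ pfIntegral μ F :=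
  iSup₂_le fun d hd => le_iSup₂_of_le d (fun t => (hFG t).trans (hd t)) le_rfl

theorem sum_le_pfIntegral_of_disjoint {F : Set ℝ≥0∞ → A} {m : ℕ}
    (b : Fin m → A) (hb : ∀ i j, i ≠ j → b i ⊓ b j = ⊥) (y : Fin m → ℝ≥0∞)
    (hF : ∀ t i, t < y i → F (Set.Iic t) ⊓ b i = ⊥) : ∑ i, μ (b i) * y i ≤ pfIntegral μ F := by
  rw [← SimpleData.sum_ofDisjoint μ b hb y]
  exact le_iSup₂_of_le (SimpleData.ofDisjoint b hb y)
    (fun t => SimpleData.le_toFun_ofDisjoint b hb y (hF t)) le_rfl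

theorem sum_le_iSup_pfIntegral_of_lt (h0 : μ ⊥ = 0) (hμ : IsSigmaAdditive μ)
    {f : NNMeasFun A} {g : ℕ → NNMeasFun A} (hg : ∀ t, Antitone fun n => (g n).toFun (Set.Iic t))
    (hglb : ∀ t, IsGLB (Set.range fun n => (g n).toFun (Set.Iic t)) (f.toFun (Set.Iic t)))
    {d : SimpleData A} (hd : ∀ t, f.toFun (Set.Iic t) ≤ d.toFun (Set.Iic t))
    {y : Fin d.m → ℝ≥0∞} (hy : ∀ i, y i < d.x i ∨ y i = 0) :
    ∑ i, μ (d.a i) * y i ≤ ⨆ n, pfIntegral μ (g n).toFun := by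
  set B : ℕ → Fin d.m → A := fun n i => d.a i ⊓ ((g n).toFun (Set.Iic (y i)))ᶜ
  have hB_mono : ∀ i, Monotone fun n => B n i := fun i _ _ hnk =>
    inf_le_inf_left _ (compl_le_compl (hg _ hnk))
  have hB_lub : ∀ i, y i < d.x i → IsLUB (Set.range fun n => B n i) (d.a i) := by
    intro i hi
    have hdisj : Disjoint (d.a i) (f.toFun (Set.Iic (y i))) :=
      (disjoint_iff.mpr (d.inf_toFun_Iic_eq_bot hi)).mono_right (hd _)
    simpa only [inf_eq_left.mpr hdisj.le_compl_right] using
      (hglb (y i)).isLUB_range_compl.inf_range_left (d.a i)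
  have hB_le : ∀ n, ∑ i, μ (B n i) * y i ≤ pfIntegral μ (g n).toFun := by
    intro n
    refine sum_le_pfIntegral_of_disjoint (B n) (fun i j hij => ?_) y fun t i hti => ?_
    · exact le_bot_iff.mp ((inf_le_inf inf_le_left inf_le_left).trans (d.disjoint i j hij).le)
    · have hle : (g n).toFun (Set.Iic t) ≤ (g n).toFun (Set.Iic (y i)) :=
        (g n).mono measurableSet_Iic measurableSet_Iic (Set.Iic_subset_Iic.mpr hti.le)
      exact disjoint_iff.mp (disjoint_compl_right.mono hle inf_le_right)
  calc ∑ i, μ (d.a i) * y i = ∑ i, ⨆ n, μ (B n i) * y i := by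
        refine Finset.sum_congr rfl fun i _ => ?_
        rcases hy i with hi | hi
        · rw [← ENNReal.iSup_mul, hμ.iSup_eq_of_monotone h0 (hB_mono i) (hB_lub i hi)]
        · simp [hi]
    _ = ⨆ n, ∑ i, μ (B n i) * y i :=
        ENNReal.finsetSum_iSup_of_monotone fun i _ _ hnk =>
          mul_le_mul_left (hμ.mono h0 (hB_mono i hnk)) _
    _ ≤ ⨆ n, pfIntegral μ (g n).toFun := iSup_mono hB_le

theorem sum_le_iSup_pfIntegral (h0 : μ ⊥ = 0) (hμ : IsSigmaAdditive μ)
    {f : NNMeasFun A} {g : ℕ → NNMeasFun A} (hg : ∀ t, Antitone fun n => (g n).toFun (Set.Iic t))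
    (hglb : ∀ t, IsGLB (Set.range fun n => (g n).toFun (Set.Iic t)) (f.toFun (Set.Iic t)))
    {d : SimpleData A} (hd : ∀ t, f.toFun (Set.Iic t) ≤ d.toFun (Set.Iic t)) :
    ∑ i, μ (d.a i) * d.x i ≤ ⨆ n, pfIntegral μ (g n).toFun := by
  choose u hu_mono hu_lt hu_sup using fun i => ENNReal.exists_monotone_approx_from_below (d.x i)
  calc ∑ i, μ (d.a i) * d.x i = ⨆ k, ∑ i, μ (d.a i) * u i k := by
        rw [← ENNReal.finsetSum_iSup_of_monotone (f := fun i k => μ (d.a i) * u i k)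
          fun i _ _ hkl => mul_le_mul_right (hu_mono i hkl) _]
        simp_rw [← ENNReal.mul_iSup, hu_sup]
    _ ≤ ⨆ n, pfIntegral μ (g n).toFun :=
        iSup_le fun k => sum_le_iSup_pfIntegral_of_lt h0 hμ hg hglb hd fun i => hu_lt i k

end Integral

theorem monotone_convergence_general {A : Type*} [BooleanAlgebra A]
    (μ : A → ℝ≥0∞) (h0 : μ ⊥ = 0)
    (hμ : ∀ a : ℕ → A, (∀ i j, i ≠ j → a i ⊓ a j = ⊥) →
      ∀ s, IsLUB (Set.range a) s → μ s = ∑' n, μ (a n))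
    (f : NNMeasFun A) (g : ℕ → NNMeasFun A)
    (hmono : ∀ (n : ℕ) (t : ℝ≥0∞),
      (g (n + 1)).toFun (Set.Iic t) ≤ (g n).toFun (Set.Iic t))
    (hle : ∀ (n : ℕ) (t : ℝ≥0∞), f.toFun (Set.Iic t) ≤ (g n).toFun (Set.Iic t))
    (hglb : ∀ t : ℝ≥0∞,
      IsGLB (Set.range fun n => (g n).toFun (Set.Iic t)) (f.toFun (Set.Iic t))) :
    ⨆ n, pfIntegral μ (g n).toFun = pfIntegral μ f.toFun :=
  le_antisymm (iSup_le fun n => pfIntegral_anti (hle n))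
    (iSup₂_le fun _ hd => sum_le_iSup_pfIntegral h0 hμ
      (fun t => antitone_nat_of_succ_le (hmono · t)) hglb hd)

/-- Levi's theorem / Lebesgue monotone convergence theorem for abstract σ-algebras. -/
theorem monotone_convergence {A : Type*} [BooleanAlgebra A]
    (hA : ∀ a : ℕ → A, ∃ s, IsLUB (Set.range a) s)
    (μ : A → ℝ≥0∞) (h0 : μ ⊥ = 0)
    (hμ : ∀ a : ℕ → A, (∀ i j, i ≠ j → a i ⊓ a j = ⊥) →
      ∀ s, IsLUB (Set.range a) s → μ s = ∑' n, μ (a n))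
    (f : NNMeasFun A) (g : ℕ → NNMeasFun A)
    (hmono : ∀ (n : ℕ) (t : ℝ≥0∞),
      (g (n + 1)).toFun (Set.Iic t) ≤ (g n).toFun (Set.Iic t))
    (hle : ∀ (n : ℕ) (t : ℝ≥0∞), f.toFun (Set.Iic t) ≤ (g n).toFun (Set.Iic t))
    (hglb : ∀ t : ℝ≥0∞,
      IsGLB (Set.range fun n => (g n).toFun (Set.Iic t)) (f.toFun (Set.Iic t))) :
    ⨆ n, pfIntegral μ (g n).toFun = pfIntegral μ f.toFun :=
  monotone_convergence_general μ h0 hμ f g hmono hle hglb
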